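/- arXiv:0803.0104 — 6 statements merged into one kernel-verified Lean document; each statement's English description precedes it below -/
import Mathlib

section
/- Let f : (0,1] → ℝ be continuous and strictly increasing. For probability distributions p, q on a finite set A with q_a > 0 for all a, define D(p||q) = Σ_a ∫_{q_a}^{p_a} (f(u) - f(q_a)) du. Then D(p||q) ≥ 0, with equality if and only if p = q. -/
open Set MeasureTheory Finset
open scoped Interval

/-!
Each summand is nonnegative, since `f u - f (q a)` has the sign of `u - q a` on the interval
between `q a` and `p a`. If `p ≠ q`, equal total mass forces some `q b < p b`, and the summand
at `b` integrates a positive monotone, hence integrable, function over `[q b, p b]`.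
A coordinate with `p b < q b` would not do: for `p b = 0` the integrand may fail to be
integrable near `0`, and the integral is then `0` by convention.
-/

theorem intervalIntegral_sub_nonneg_of_monotoneOn {f : ℝ → ℝ} {s : Set ℝ} {x y : ℝ}
    (hf : MonotoneOn f s) (hx : x ∈ s) (hs : Ι x y ⊆ s) :
    0 ≤ ∫ u in x..y, (f u - f x) := by
  rcases le_or_gt x y with hxy | hyx
  · rw [intervalIntegral.integral_of_le hxy]
    refine setIntegral_nonneg measurableSet_Ioc fun u hu ↦ sub_nonneg.2 ?_
    exact hf hx (hs (by rwa [uIoc_of_le hxy])) hu.1.le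
  · rw [intervalIntegral.integral_symm, intervalIntegral.integral_of_le hyx.le, neg_nonneg]
    refine setIntegral_nonpos measurableSet_Ioc fun u hu ↦ sub_nonpos.2 ?_
    exact hf (hs (by rwa [uIoc_of_ge hyx.le])) hx hu.2

theorem intervalIntegral_sub_pos_of_strictMonoOn {f : ℝ → ℝ} {s : Set ℝ} {x y : ℝ}
    (hf : StrictMonoOn f s) (hxy : x < y) (hs : Icc x y ⊆ s) :
    0 < ∫ u in x..y, (f u - f x) := by
  have hint : IntervalIntegrable (fun u ↦ f u - f x) volume x y :=
    ((hf.monotoneOn.mono (uIcc_of_le hxy.le ▸ hs)).intervalIntegrable).sub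
      intervalIntegrable_const
  refine intervalIntegral.intervalIntegral_pos_of_pos_on hint (fun u hu ↦ ?_) hxy
  exact sub_pos.2 (hf (hs (left_mem_Icc.2 hxy.le)) (hs (Ioo_subset_Icc_self hu)) hu.1)

theorem le_one_of_sum_eq_one {A R : Type*} [Fintype A] [AddCommMonoid R] [PartialOrder R]
    [IsOrderedAddMonoid R] [One R] {p : A → R} (hp0 : ∀ a, 0 ≤ p a)
    (hp1 : ∑ a, p a = 1) (a : A) : p a ≤ 1 :=
  hp1 ▸ single_le_sum (fun b _ ↦ hp0 b) (mem_univ a)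

theorem exists_lt_of_sum_eq_of_ne {A R : Type*} [Fintype A] [AddCommMonoid R] [LinearOrder R]
    [IsOrderedCancelAddMonoid R] {p q : A → R}
    (hsum : ∑ a, p a = ∑ a, q a) (hne : p ≠ q) : ∃ b, q b < p b := by
  by_contra! hle
  exact hne (funext fun a ↦ (sum_eq_sum_iff_of_le fun b _ ↦ hle b).1 hsum a (mem_univ a))

theorem stmt_0_general {A : Type*} [Fintype A] (f : ℝ → ℝ)
    (hfm : StrictMonoOn f (Ioc 0 1))
    (p q : A → ℝ)
    (hp0 : ∀ a, 0 ≤ p a) (hp1 : ∑ a, p a = 1)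
    (hq0 : ∀ a, 0 < q a) (hq1 : ∑ a, q a = 1) :
    0 ≤ ∑ a, ∫ u in (q a)..(p a), (f u - f (q a)) ∧
      ((∑ a, ∫ u in (q a)..(p a), (f u - f (q a))) = 0 ↔ p = q) := by
  have hp_le := le_one_of_sum_eq_one hp0 hp1
  have hq_le := le_one_of_sum_eq_one (fun a ↦ (hq0 a).le) hq1
  have hterm_nonneg a : 0 ≤ ∫ u in (q a)..(p a), (f u - f (q a)) :=
    intervalIntegral_sub_nonneg_of_monotoneOn hfm.monotoneOn ⟨hq0 a, hq_le a⟩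
      (Ioc_subset_Ioc (le_inf (hq0 a).le (hp0 a)) (sup_le (hq_le a) (hp_le a)))
  refine ⟨sum_nonneg fun a _ ↦ hterm_nonneg a, fun hzero ↦ ?_, ?_⟩
  · by_contra hne
    obtain ⟨b, hb⟩ := exists_lt_of_sum_eq_of_ne (hp1.trans hq1.symm) hne
    have hterm_pos := intervalIntegral_sub_pos_of_strictMonoOn hfm hb
      fun u hu ↦ ⟨(hq0 b).trans_le hu.1, hu.2.trans (hp_le b)⟩
    exact hterm_pos.ne'
      ((sum_eq_zero_iff_of_nonneg fun a _ ↦ hterm_nonneg a).1 hzero b (mem_univ b))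
  · rintro rfl
    simp

/-- Bregman divergence nonnegativity: for `f` continuous and strictly increasing on `(0,1]`
and probability distributions `p`, `q` on a finite set `A` with `q` strictly positive,
`D(p‖q) = Σ_a ∫_{q_a}^{p_a} (f u - f (q_a)) du` satisfies `D(p‖q) ≥ 0`,
with equality iff `p = q`. -/
theorem stmt_0 {A : Type*} [Fintype A] (f : ℝ → ℝ)
    (hfc : ContinuousOn f (Ioc 0 1)) (hfm : StrictMonoOn f (Ioc 0 1))
    (p q : A → ℝ)
    (hp0 : ∀ a, 0 ≤ p a) (hp1 : ∑ a, p a = 1)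
    (hq0 : ∀ a, 0 < q a) (hq1 : ∑ a, q a = 1) :
    0 ≤ ∑ a, ∫ u in (q a)..(p a), (f u - f (q a)) ∧
      ((∑ a, ∫ u in (q a)..(p a), (f u - f (q a))) = 0 ↔ p = q) :=
  stmt_0_general f hfm p q hp0 hp1 hq0 hq1
end

section
/- Assume f : (0,1] → ℝ is continuous, strictly increasing, with lim_{u↓0} f(u) = -∞. A probability distribution p* on a finite set A satisfies the variational principle with parameters θ ∈ ℝ^n if and only if there exists α ∈ ℝ such that f(p*_a) = -α - Σ_{j=1}^n θ_j H_j(a) for all a ∈ A (in particular p*_a > 0 for all a). -/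
open Set

lemma tangent_aux {h f : ℝ → ℝ}
    (hconc : ConcaveOn ℝ (Icc 0 1) h)
    (hder : ∀ u ∈ Ioo (0:ℝ) 1, HasDerivAt h (-(f u)) u)
    {x y : ℝ} (hx : x ∈ Ioo (0:ℝ) 1) (hy : y ∈ Icc (0:ℝ) 1) :
    h y ≤ h x - f x * (y - x) := by
  have hxI : x ∈ Icc (0:ℝ) 1 := Ioo_subset_Icc_self hx
  have hd := hder x hx
  rcases lt_trichotomy y x with hlt | rfl | hlt
  · have hs := hconc.le_slope_of_hasDerivAt hy hxI hlt hd
    rw [slope_def_field, le_div_iff₀ (by linarith)] at hs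
    nlinarith
  · simp
  · have hs := hconc.slope_le_of_hasDerivAt hxI hy hlt hd
    rw [slope_def_field, div_le_iff₀ (by linarith)] at hs
    nlinarith

lemma sum_eq_pair {A : Type*} [Fintype A] [DecidableEq A] (g : A → ℝ) {a b : A} (hab : a ≠ b)
    (hz : ∀ x, x ≠ a → x ≠ b → g x = 0) : ∑ x, g x = g a + g b := by
  rw [← Finset.sum_pair hab]
  refine (Finset.sum_subset (Finset.subset_univ _) (fun x _ hx => ?_)).symm
  simp only [Finset.mem_insert, Finset.mem_singleton, not_or] at hx
  exact hz x hx.1 hx.2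

/-- Characterisation of the variational principle, case `f(0⁺) = -∞`:
for `f` continuous, strictly increasing on `(0,1]` with `f(u) → -∞` as `u → 0⁺`,
and entropy `I(p) = Σ_a h(p_a)` with `h` strictly concave, continuous, `h' = -f`,
a probability distribution `p⋆` satisfies the variational principle with parameters `θ`
iff there exists `α` such that `p⋆_a > 0` and `f(p⋆_a) = -α - Σ_j θ_j H_j(a)` for all `a`. -/
theorem stmt_4 {A : Type*} [Fintype A]
    {n : ℕ} (H : Fin n → A → ℝ) (θ : Fin n → ℝ)
    (h f : ℝ → ℝ)
    (hhc : ContinuousOn h (Icc 0 1)) (hconc : StrictConcaveOn ℝ (Icc 0 1) h)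
    (hder : ∀ u ∈ Ioo (0:ℝ) 1, HasDerivAt h (-(f u)) u)
    (hfc : ContinuousOn f (Ioc 0 1)) (hfm : StrictMonoOn f (Ioc 0 1))
    (hfbot : Filter.Tendsto f (nhdsWithin 0 (Ioi 0)) Filter.atBot)
    (pstar : A → ℝ) (hp0 : ∀ a, 0 ≤ pstar a) (hpsum : ∑ a, pstar a = 1) :
    (∀ p : A → ℝ, (∀ a, 0 ≤ p a) → ∑ a, p a = 1 →
      (∑ a, h (p a)) - ∑ j, θ j * ∑ a, p a * H j a ≤
        (∑ a, h (pstar a)) - ∑ j, θ j * ∑ a, pstar a * H j a) ↔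
    (∃ α : ℝ, ∀ a, 0 < pstar a ∧ f (pstar a) = -α - ∑ j, θ j * H j a) := by
  classical
  set c : A → ℝ := fun a => ∑ j, θ j * H j a with hcdef
  have hswap : ∀ p : A → ℝ, ∑ j, θ j * ∑ a, p a * H j a = ∑ a, p a * c a := by
    intro p
    simp only [hcdef, Finset.mul_sum]
    rw [Finset.sum_comm]
    exact Finset.sum_congr rfl fun a _ => Finset.sum_congr rfl fun j _ => by ring
  have hobj : ∀ p : A → ℝ, (∑ a, h (p a)) - ∑ j, θ j * ∑ a, p a * H j a
      = ∑ a, (h (p a) - p a * c a) := by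
    intro p
    rw [hswap p, ← Finset.sum_sub_distrib]
  have hple : ∀ (p : A → ℝ), (∀ a, 0 ≤ p a) → (∑ a, p a = 1) → ∀ a, p a ≤ 1 := by
    intro p hp hs a
    calc p a ≤ ∑ x, p x := Finset.single_le_sum (fun i _ => hp i) (Finset.mem_univ a)
    _ = 1 := hs
  have hpair_le : ∀ (p : A → ℝ), (∀ a, 0 ≤ p a) → (∑ a, p a = 1) →
      ∀ {a b : A}, a ≠ b → p a + p b ≤ 1 := by
    intro p hp hs a b hab
    have h2 := Finset.sum_le_sum_of_subset_of_nonneg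
      (Finset.subset_univ ({a, b} : Finset A)) (fun i _ _ => hp i)
    rw [Finset.sum_pair hab, hs] at h2
    exact h2
  constructor
  · intro hmax
    have hpos : ∀ b, 0 < pstar b := by
      intro b
      rcases (hp0 b).lt_or_eq with hb | hb
      · exact hb
      exfalso
      obtain ⟨c0, hc0⟩ : ∃ c0, 0 < pstar c0 := by
        by_contra hno
        push_neg at hno
        have hz : ∑ a, pstar a = 0 := Finset.sum_eq_zero fun a _ => le_antisymm (hno a) (hp0 a)
        rw [hpsum] at hz; norm_num at hz
      have hbc : b ≠ c0 := by rintro rfl; rw [← hb] at hc0; exact lt_irrefl _ hc0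
      have hm1 : pstar c0 ≤ 1 := hple pstar hp0 hpsum c0
      have hev1 : ∀ᶠ ε in nhdsWithin (0:ℝ) (Ioi 0), f ε < f (pstar c0 / 2) + c c0 - c b :=
        hfbot.eventually (Filter.eventually_lt_atBot _)
      have hev2 : ∀ᶠ ε in nhdsWithin (0:ℝ) (Ioi 0), ε < pstar c0 / 2 := by
        filter_upwards [nhdsWithin_le_nhds (Iio_mem_nhds (show (0:ℝ) < pstar c0 / 2 by linarith))] with ε hε using hε
      have hev3 : ∀ᶠ ε in nhdsWithin (0:ℝ) (Ioi 0), (0:ℝ) < ε := by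
        filter_upwards [self_mem_nhdsWithin] with ε hε using hε
      obtain ⟨ε, ⟨hfε, hεm⟩, hε0⟩ := ((hev1.and hev2).and hev3).exists
      have hε1 : ε < 1 := by linarith
      set q : A → ℝ := fun x => if x = b then ε else if x = c0 then pstar c0 - ε else pstar x
        with hq
      have hqb : q b = ε := by simp [hq]
      have hqc : q c0 = pstar c0 - ε := by simp [hq, Ne.symm hbc]
      have hqo : ∀ x, x ≠ b → x ≠ c0 → q x = pstar x := fun x h1 h2 => by simp [hq, h1, h2]
      have hq0 : ∀ x, 0 ≤ q x := by
        intro x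
        by_cases h1 : x = b
        · rw [h1, hqb]; linarith
        by_cases h2 : x = c0
        · rw [h2, hqc]; linarith
        rw [hqo x h1 h2]; exact hp0 x
      have hqs : ∑ x, q x = 1 := by
        have hd := sum_eq_pair (fun x => q x - pstar x) hbc
          (fun x h1 h2 => by simp [hqo x h1 h2])
        rw [Finset.sum_sub_distrib, hpsum] at hd
        simp only [hqb, hqc, ← hb] at hd
        linarith
      have hkey := hmax q hq0 hqs
      rw [hobj q, hobj pstar] at hkey
      have hdd := sum_eq_pair (fun x => (h (q x) - q x * c x) - (h (pstar x) - pstar x * c x)) hbc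
        (fun x h1 h2 => by simp [hqo x h1 h2])
      rw [Finset.sum_sub_distrib] at hdd
      simp only [hqb, hqc, ← hb] at hdd
      have h0' : h ε - h 0 + (h (pstar c0 - ε) - h (pstar c0)) + ε * (c c0 - c b) ≤ 0 := by
        nlinarith [hkey, hdd]
      have ht1 : h 0 ≤ h ε - f ε * (0 - ε) :=
        tangent_aux hconc.concaveOn hder ⟨hε0, hε1⟩ ⟨le_refl 0, zero_le_one⟩
      have ht2 : h (pstar c0) ≤ h (pstar c0 - ε)
          - f (pstar c0 - ε) * (pstar c0 - (pstar c0 - ε)) :=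
        tangent_aux hconc.concaveOn hder ⟨by linarith, by linarith⟩ ⟨by linarith, hm1⟩
      have hmono : f (pstar c0 / 2) ≤ f (pstar c0 - ε) :=
        hfm.monotoneOn ⟨by linarith, by linarith⟩ ⟨by linarith, by linarith⟩ (by linarith)
      have e1 : ε * f ε < ε * (f (pstar c0 / 2) + c c0 - c b) :=
        mul_lt_mul_of_pos_left hfε hε0
      have e2 : ε * f (pstar c0 / 2) ≤ ε * f (pstar c0 - ε) :=
        mul_le_mul_of_nonneg_left hmono hε0.le
      nlinarith [ht1, ht2, e1, e2, h0']
    have hne : Nonempty A := by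
      rcases isEmpty_or_nonempty A with hA | hA
      · exfalso; rw [Finset.univ_eq_empty, Finset.sum_empty] at hpsum; norm_num at hpsum
      · exact hA
    obtain ⟨a0⟩ := hne
    refine ⟨-(f (pstar a0)) - c a0, fun a => ⟨hpos a, ?_⟩⟩
    by_cases haa : a = a0
    · subst haa; ring
    · have hlt : pstar a < 1 := by
        have := hpair_le pstar hp0 hpsum haa; linarith [hpos a0]
      have hlt0 : pstar a0 < 1 := by
        have := hpair_le pstar hp0 hpsum haa; linarith [hpos a]
      set δ := min (pstar a) (pstar a0) with hδdef
      have hδ : 0 < δ := lt_min (hpos a) (hpos a0)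
      have hloc : ∀ ε : ℝ, |ε| < δ →
          h (pstar a + ε) - (pstar a + ε) * c a + (h (pstar a0 - ε) - (pstar a0 - ε) * c a0)
            ≤ h (pstar a) - pstar a * c a + (h (pstar a0) - pstar a0 * c a0) := by
        intro ε hε
        rw [abs_lt] at hε
        have hδa : δ ≤ pstar a := min_le_left _ _
        have hδa0 : δ ≤ pstar a0 := min_le_right _ _
        set q : A → ℝ := fun x => if x = a then pstar a + ε
          else if x = a0 then pstar a0 - ε else pstar x with hq
        have hqa : q a = pstar a + ε := by simp [hq]
        have hqa0 : q a0 = pstar a0 - ε := by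
          have hne' : a0 ≠ a := fun hh => haa hh.symm
          simp [hq, hne']
        have hqo : ∀ x, x ≠ a → x ≠ a0 → q x = pstar x := fun x h1 h2 => by simp [hq, h1, h2]
        have hq0 : ∀ x, 0 ≤ q x := by
          intro x
          by_cases h1 : x = a
          · rw [h1, hqa]; linarith [hε.1]
          by_cases h2 : x = a0
          · rw [h2, hqa0]; linarith [hε.2]
          rw [hqo x h1 h2]; exact hp0 x
        have hqs : ∑ x, q x = 1 := by
          have hd := sum_eq_pair (fun x => q x - pstar x) haa
            (fun x h1 h2 => by simp [hqo x h1 h2])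
          rw [Finset.sum_sub_distrib, hpsum] at hd
          simp only [hqa, hqa0] at hd
          linarith
        have hkey := hmax q hq0 hqs
        rw [hobj q, hobj pstar] at hkey
        have hdd := sum_eq_pair
          (fun x => (h (q x) - q x * c x) - (h (pstar x) - pstar x * c x)) haa
          (fun x h1 h2 => by simp [hqo x h1 h2])
        rw [Finset.sum_sub_distrib] at hdd
        simp only [hqa, hqa0] at hdd
        linarith
      have hda : HasDerivAt h (-(f (pstar a))) (pstar a) := hder _ ⟨hpos a, hlt⟩
      have hda0 : HasDerivAt h (-(f (pstar a0))) (pstar a0) := hder _ ⟨hpos a0, hlt0⟩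
      have i1 : HasDerivAt (fun ε : ℝ => pstar a + ε) 1 0 := by
        simpa using (hasDerivAt_id (0:ℝ)).const_add (pstar a)
      have i2 : HasDerivAt (fun ε : ℝ => pstar a0 - ε) (-1) 0 := by
        simpa using (hasDerivAt_id (0:ℝ)).const_sub (pstar a0)
      have H1 : HasDerivAt (fun ε : ℝ => h (pstar a + ε)) (-(f (pstar a)) * 1) 0 := by
        refine HasDerivAt.comp 0 ?_ i1
        simpa using hda
      have H2 : HasDerivAt (fun ε : ℝ => h (pstar a0 - ε)) (-(f (pstar a0)) * (-1)) 0 := by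
        refine HasDerivAt.comp 0 ?_ i2
        simpa using hda0
      have HF : HasDerivAt (fun ε : ℝ => h (pstar a + ε) - (pstar a + ε) * c a
          + (h (pstar a0 - ε) - (pstar a0 - ε) * c a0))
          ((-(f (pstar a)) * 1 - 1 * c a) + (-(f (pstar a0)) * (-1) - (-1) * c a0)) 0 :=
        (H1.sub (i1.mul_const (c a))).add (H2.sub (i2.mul_const (c a0)))
      have hlm : IsLocalMax (fun ε : ℝ => h (pstar a + ε) - (pstar a + ε) * c a
          + (h (pstar a0 - ε) - (pstar a0 - ε) * c a0)) 0 := by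
        have hev : ∀ᶠ ε in nhds (0:ℝ), |ε| < δ := by
          filter_upwards [Metric.ball_mem_nhds (0:ℝ) hδ] with ε hε
          simpa [Real.dist_eq] using hε
        show ∀ᶠ ε in nhds (0:ℝ), _ ≤ _
        filter_upwards [hev] with ε hε
        simpa using hloc ε hε
      have hz := hlm.hasDerivAt_eq_zero HF
      linarith
  · rintro ⟨α, hα⟩ p hpp0 hpp1
    rw [hobj p, hobj pstar]
    by_cases hcase : ∀ a, pstar a < 1
    · have key : ∀ a ∈ Finset.univ,
          h (p a) - p a * c a ≤ (h (pstar a) - pstar a * c a) + α * (p a - pstar a) := by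
        intro a _
        have ht := tangent_aux hconc.concaveOn hder ⟨(hα a).1, hcase a⟩
          ⟨hpp0 a, hple p hpp0 hpp1 a⟩
        rw [(hα a).2] at ht
        nlinarith [ht]
      calc ∑ a, (h (p a) - p a * c a)
          ≤ ∑ a, ((h (pstar a) - pstar a * c a) + α * (p a - pstar a)) :=
            Finset.sum_le_sum key
        _ = ∑ a, (h (pstar a) - pstar a * c a) + α * (∑ a, (p a - pstar a)) := by
            rw [Finset.sum_add_distrib, ← Finset.mul_sum]
        _ = ∑ a, (h (pstar a) - pstar a * c a) := by
            have hzero : ∑ a, (p a - pstar a) = 0 := by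
              rw [Finset.sum_sub_distrib, hpp1, hpsum]; ring
            rw [hzero, mul_zero, add_zero]
    · push_neg at hcase
      obtain ⟨a, ha1⟩ := hcase
      have ha1' : pstar a = 1 := le_antisymm (hple pstar hp0 hpsum a) ha1
      have huniv : (Finset.univ : Finset A) = {a} := by
        refine Finset.eq_singleton_iff_unique_mem.mpr ⟨Finset.mem_univ a, fun x _ => ?_⟩
        by_contra hx
        have := hpair_le pstar hp0 hpsum hx
        linarith [(hα x).1]
      rw [huniv, Finset.sum_singleton, Finset.sum_singleton]
      have hpa : p a = 1 := by rw [huniv, Finset.sum_singleton] at hpp1; exact hpp1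
      rw [hpa, ha1']
end

section
/- Assume f : [0,1] → ℝ is continuous and strictly increasing (so f(0) is finite). A probability distribution p* on a finite set A satisfies the variational principle with parameters θ ∈ ℝ^n if and only if there exist α ∈ ℝ and a subset A_0 ⊆ A such that: (i) f(p*_a) = -α - Σ_j θ_j H_j(a) for all a ∉ A_0; (ii) p*_a = 0 for all a ∈ A_0; and (iii) f(0) + Σ_j θ_j H_j(a) ≥ -α for all a ∈ A_0. -/
/-!
Write `C a = ∑ j, θ j * H j a`; the objective is `∑ a, (h (p a) - p a * C a)` on the standard
simplex. Since `h' = -f` is decreasing, `h` is concave with tangent bound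
`h y ≤ h x - f x * (y - x)` on `[0, 1]`.

Sufficiency: the tangent bound at `p⋆` and the conditions (i)–(iii) bound each summand of the
objective at `p` by its value at `p⋆` plus `α * (p a - p⋆ a)`, and these terms sum to zero.

Necessity: moving mass `t ≤ p⋆ a` from `a` to `b` cannot increase the objective, which by the
tangent bound gives `f (p⋆ a - t) + C a ≤ f (p⋆ b + t) + C b`. Letting `t → 0⁺` (continuity
of `f`) shows that `f (p⋆ ·) + C` attains its minimum `-α` at every point of the support of
`p⋆`; `A₀` is the complement of the support.
-/

open Set Finset MeasureTheory

theorem MonotoneOn.mul_sub_le_intervalIntegral {f : ℝ → ℝ} {x y : ℝ}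
    (hf : MonotoneOn f (uIcc x y)) : f x * (y - x) ≤ ∫ v in x..y, f v := by
  rcases le_total x y with hxy | hyx
  · have := intervalIntegral.integral_mono_on hxy (intervalIntegrable_const (μ := volume))
      hf.intervalIntegrable
      fun t ht => hf left_mem_uIcc (by rwa [uIcc_of_le hxy]) ht.1
    simpa [mul_comm] using this
  · rw [intervalIntegral.integral_symm]
    have := intervalIntegral.integral_mono_on hyx hf.intervalIntegrable.symm
      (intervalIntegrable_const (μ := volume))
      fun t ht => hf (by rwa [uIcc_of_ge hyx]) left_mem_uIcc ht.2
    simp only [intervalIntegral.integral_const, smul_eq_mul] at this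
    linarith

theorem MonotoneOn.intervalIntegral_add_mul_sub_le {f : ℝ → ℝ} {s : Set ℝ} [s.OrdConnected]
    (hf : MonotoneOn f s) {c x y : ℝ} (hc : c ∈ s) (hx : x ∈ s) (hy : y ∈ s) :
    (∫ v in c..x, f v) + f x * (y - x) ≤ ∫ v in c..y, f v := by
  have hmono : ∀ {a b}, a ∈ s → b ∈ s → MonotoneOn f (uIcc a b) :=
    fun ha hb => hf.mono (Set.OrdConnected.uIcc_subset ‹_› ha hb)
  rw [← intervalIntegral.integral_add_adjacent_intervals (hmono hc hx).intervalIntegrable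
    (hmono hx hy).intervalIntegrable]
  linarith [(hmono hx hy).mul_sub_le_intervalIntegral]

section Simplex

variable {A : Type*} [Fintype A]

theorem IsMaxOn.transfer_mass_le {φ : A → ℝ → ℝ} {q : A → ℝ}
    (hmax : IsMaxOn (fun p => ∑ x, φ x (p x)) (stdSimplex ℝ A) q) (hq : q ∈ stdSimplex ℝ A)
    {a b : A} (hab : a ≠ b) {t : ℝ} (ht : 0 ≤ t) (hta : t ≤ q a) :
    φ a (q a - t) + φ b (q b + t) ≤ φ a (q a) + φ b (q b) := by
  classical
  set p := Function.update (Function.update q a (q a - t)) b (q b + t)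
  have hpa : p a = q a - t := by simp [p, hab]
  have hpb : p b = q b + t := by simp [p]
  have hsum : ∀ ψ : A → ℝ → ℝ, ∑ x, ψ x (p x) =
      ∑ x, ψ x (q x) + (ψ a (q a - t) - ψ a (q a)) + (ψ b (q b + t) - ψ b (q b)) := by
    intro ψ
    have := Fintype.sum_eq_add (f := fun x => ψ x (p x) - ψ x (q x)) a b hab
      fun x hx => by simp [p, hx.1, hx.2]
    rw [sum_sub_distrib, hpa, hpb] at this
    linarith
  have hp : p ∈ stdSimplex ℝ A := by
    refine ⟨fun x => ?_, ?_⟩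
    · simp only [p, Function.update_apply]
      split_ifs <;> linarith [hq.1 x, hq.1 b]
    · linarith [hsum fun _ u => u, hq.2]
  linarith [hsum φ, isMaxOn_iff.1 hmax p hp]

variable {f h : ℝ → ℝ} {C q : A → ℝ}

theorem IsMaxOn.add_le_add_of_pos (hf : ContinuousOn f (Icc 0 1))
    (htan : ∀ x ∈ Icc (0 : ℝ) 1, ∀ y ∈ Icc (0 : ℝ) 1, h y ≤ h x - f x * (y - x))
    (hmax : IsMaxOn (fun p => ∑ x, (h (p x) - p x * C x)) (stdSimplex ℝ A) q)
    (hq : q ∈ stdSimplex ℝ A) {a : A} (ha : 0 < q a) (b : A) :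
    f (q a) + C a ≤ f (q b) + C b := by
  classical
  rcases eq_or_ne a b with rfl | hab
  · rfl
  have hab_le : q a + q b ≤ 1 := by
    rw [← hq.2, ← sum_pair hab]
    exact sum_le_univ_sum_of_nonneg hq.1
  have hmapsA : MapsTo (fun t => q a - t) (Icc 0 (q a)) (Icc 0 1) := fun t ht =>
    ⟨by linarith [ht.2], by linarith [ht.1, (mem_Icc_of_mem_stdSimplex hq a).2]⟩
  have hmapsB : MapsTo (fun t => q b + t) (Icc 0 (q a)) (Icc 0 1) := fun t ht =>
    ⟨by linarith [ht.1, hq.1 b], by linarith [ht.2]⟩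
  have hstep : ∀ t ∈ Ioc 0 (q a), f (q a - t) + C a ≤ f (q b + t) + C b := by
    intro t ht
    have htransfer := hmax.transfer_mass_le (φ := fun x u => h u - u * C x) hq hab ht.1.le ht.2
    have hA := htan _ (hmapsA (Ioc_subset_Icc_self ht)) _ (mem_Icc_of_mem_stdSimplex hq a)
    have hB := htan _ (hmapsB (Ioc_subset_Icc_self ht)) _ (mem_Icc_of_mem_stdSimplex hq b)
    refine le_of_mul_le_mul_left ?_ ht.1
    linarith
  have hcontA : ContinuousOn (fun t => f (q a - t) + C a) (Icc 0 (q a)) :=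
    (hf.comp (by fun_prop) hmapsA).add continuousOn_const
  have hcontB : ContinuousOn (fun t => f (q b + t) + C b) (Icc 0 (q a)) :=
    (hf.comp (by fun_prop) hmapsB).add continuousOn_const
  have h0 : (0 : ℝ) ∈ Icc 0 (q a) := left_mem_Icc.2 ha.le
  simpa using ContinuousWithinAt.closure_le (closure_Ioc ha.ne ▸ h0)
    ((hcontA 0 h0).mono Ioc_subset_Icc_self) ((hcontB 0 h0).mono Ioc_subset_Icc_self) hstep

theorem exists_multiplier_of_isMaxOn (hf : ContinuousOn f (Icc 0 1))
    (htan : ∀ x ∈ Icc (0 : ℝ) 1, ∀ y ∈ Icc (0 : ℝ) 1, h y ≤ h x - f x * (y - x))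
    (hmax : IsMaxOn (fun p => ∑ x, (h (p x) - p x * C x)) (stdSimplex ℝ A) q)
    (hq : q ∈ stdSimplex ℝ A) :
    ∃ (α : ℝ) (A₀ : Finset A), (∀ a ∉ A₀, f (q a) = -α - C a) ∧ (∀ a ∈ A₀, q a = 0) ∧
      (∀ a ∈ A₀, -α ≤ f 0 + C a) := by
  classical
  obtain ⟨a₀, ha₀⟩ : ∃ a, 0 < q a := by
    by_contra! hle
    have := hq.2
    rw [sum_eq_zero fun a _ => le_antisymm (hle a) (hq.1 a)] at this
    exact zero_ne_one this
  have hmin := hmax.add_le_add_of_pos hf htan hq ha₀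
  refine ⟨-(f (q a₀) + C a₀), univ.filter (q · = 0), fun a ha => ?_,
    fun a ha => (mem_filter.1 ha).2, fun a ha => ?_⟩
  · have hpos : 0 < q a := (hq.1 a).lt_of_ne' (by simpa using ha)
    linarith [hmin a, hmax.add_le_add_of_pos hf htan hq hpos a₀]
  · linarith [(mem_filter.1 ha).2 ▸ hmin a]

theorem isMaxOn_of_multiplier
    (htan : ∀ x ∈ Icc (0 : ℝ) 1, ∀ y ∈ Icc (0 : ℝ) 1, h y ≤ h x - f x * (y - x))
    (hq : q ∈ stdSimplex ℝ A) {α : ℝ} {A₀ : Finset A} (h_pos : ∀ a ∉ A₀, f (q a) = -α - C a)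
    (h_zero : ∀ a ∈ A₀, q a = 0) (h_le : ∀ a ∈ A₀, -α ≤ f 0 + C a) :
    IsMaxOn (fun p => ∑ x, (h (p x) - p x * C x)) (stdSimplex ℝ A) q := by
  refine isMaxOn_iff.2 fun p hp => ?_
  have key : ∀ a, h (p a) - p a * C a ≤ h (q a) - q a * C a + α * (p a - q a) := by
    intro a
    have htan_a := htan _ (mem_Icc_of_mem_stdSimplex hq a) _ (mem_Icc_of_mem_stdSimplex hp a)
    by_cases ha : a ∈ A₀
    · rw [h_zero a ha] at htan_a ⊢
      linarith [mul_le_mul_of_nonneg_right (h_le a ha) (hp.1 a)]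
    · rw [h_pos a ha] at htan_a
      linarith
  calc ∑ x, (h (p x) - p x * C x)
      ≤ ∑ x, (h (q x) - q x * C x + α * (p x - q x)) := sum_le_sum fun a _ => key a
    _ = ∑ x, (h (q x) - q x * C x) := by
      rw [sum_add_distrib, ← mul_sum, sum_sub_distrib (f := p), hp.2, hq.2, sub_self, mul_zero,
        add_zero]

end Simplex

/-- Characterisation of the variational principle, case with cutoff (`f(0)` finite):
for `f` continuous and strictly increasing on `[0,1]`, entropy `I(p) = Σ_a h(p_a)`
with `h(u) = -∫_0^u f`, a probability distribution `p⋆` satisfies the variational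
principle with parameters `θ` iff there exist `α` and a subset `A₀ ⊆ A` such that
(i) `f(p⋆_a) = -α - Σ_j θ_j H_j(a)` for `a ∉ A₀`, (ii) `p⋆_a = 0` for `a ∈ A₀`, and
(iii) `f(0) + Σ_j θ_j H_j(a) ≥ -α` for `a ∈ A₀`. -/
theorem stmt_5 {A : Type*} [Fintype A]
    {n : ℕ} (H : Fin n → A → ℝ) (θ : Fin n → ℝ)
    (f : ℝ → ℝ)
    (hfc : ContinuousOn f (Icc 0 1)) (hfm : StrictMonoOn f (Icc 0 1))
    (h : ℝ → ℝ) (hh : ∀ u, h u = -∫ v in (0:ℝ)..u, f v)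
    (pstar : A → ℝ) (hp0 : ∀ a, 0 ≤ pstar a) (hpsum : ∑ a, pstar a = 1) :
    (∀ p : A → ℝ, (∀ a, 0 ≤ p a) → ∑ a, p a = 1 →
      (∑ a, h (p a)) - ∑ j, θ j * ∑ a, p a * H j a ≤
        (∑ a, h (pstar a)) - ∑ j, θ j * ∑ a, pstar a * H j a) ↔
    (∃ (α : ℝ) (A₀ : Finset A),
      (∀ a ∉ A₀, f (pstar a) = -α - ∑ j, θ j * H j a) ∧
      (∀ a ∈ A₀, pstar a = 0) ∧
      (∀ a ∈ A₀, -α ≤ f 0 + ∑ j, θ j * H j a)) := by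
  have hobj : ∀ p : A → ℝ, (∑ a, h (p a)) - ∑ j, θ j * ∑ a, p a * H j a =
      ∑ a, (h (p a) - p a * ∑ j, θ j * H j a) := by
    intro p
    simp only [sum_sub_distrib, mul_sum]
    rw [sum_comm]
    simp only [mul_left_comm]
  have htan : ∀ x ∈ Icc (0 : ℝ) 1, ∀ y ∈ Icc (0 : ℝ) 1, h y ≤ h x - f x * (y - x) := by
    intro x hx y hy
    rw [hh, hh]
    linarith [hfm.monotoneOn.intervalIntegral_add_mul_sub_le (left_mem_Icc.2 zero_le_one) hx hy]
  have hq : pstar ∈ stdSimplex ℝ A := ⟨hp0, hpsum⟩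
  simp only [hobj]
  constructor
  · intro hmax
    exact exists_multiplier_of_isMaxOn hfc htan (isMaxOn_iff.2 fun p hp => hmax p hp.1 hp.2) hq
  · rintro ⟨α, A₀, h_pos, h_zero, h_le⟩ p hp hps
    exact isMaxOn_iff.1 (isMaxOn_of_multiplier htan hq h_pos h_zero h_le) p ⟨hp, hps⟩
end

section
/- If the condition f(p_a) = -α - Σ_j θ_j H_j(a) holds for all a outside A_0, with p_a = 0 on A_0 and f(0) + α + Σ_j θ_j H_j(a) ≥ 0 on A_0, then for every probability distribution q on A: I(q) - Σ_j θ_j ⟨q,H_j⟩ = I(p) - Σ_j θ_j ⟨p,H_j⟩ - D(q||p) - Σ_{a∈A_0} q_a (f(0) + α + Σ_j θ_j H_j(a)), where D is the Bregman divergence; in particular p maximizes I(q) - Σ_j θ_j ⟨q,H_j⟩. -/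
open Set

lemma tangent_le_aux {f : ℝ → ℝ} (hfc : ContinuousOn f (Icc 0 1))
    (hfm : MonotoneOn f (Icc 0 1)) {p q : ℝ} (hp : p ∈ Icc 0 1) (hq : q ∈ Icc 0 1) :
    (q - p) * f p ≤ ∫ v in p..q, f v := by
  have hint : ∀ a b : ℝ, a ∈ Icc (0:ℝ) 1 → b ∈ Icc (0:ℝ) 1 →
      IntervalIntegrable f MeasureTheory.volume a b := fun a b ha hb =>
    (hfc.mono (uIcc_subset_Icc ha hb)).intervalIntegrable
  rcases le_total p q with hpq | hpq
  · have := intervalIntegral.integral_mono_on hpq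
      (intervalIntegrable_const (c := f p)) (hint p q hp hq)
      (fun x hx => hfm hp (⟨le_trans hp.1 hx.1, le_trans hx.2 hq.2⟩) hx.1)
    simpa [mul_comm] using this
  · have := intervalIntegral.integral_mono_on hpq
      (hint q p hq hp) (intervalIntegrable_const (c := f p))
      (fun x hx => hfm (⟨le_trans hq.1 hx.1, le_trans hx.2 hp.2⟩) hp hx.2)
    have hsym : (∫ v in p..q, f v) = -∫ v in q..p, f v := intervalIntegral.integral_symm q p
    simp only [intervalIntegral.integral_const, smul_eq_mul] at this
    rw [hsym]; nlinarith

/-- If `f(p_a) = -α - Σ_j θ_j H_j(a)` off `A₀`, `p_a = 0` on `A₀`, and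
`f(0) + α + Σ_j θ_j H_j(a) ≥ 0` on `A₀`, then for every probability distribution `q`,
`I(q) - Σ_j θ_j ⟨q,H_j⟩ = I(p) - Σ_j θ_j ⟨p,H_j⟩ - D(q‖p) - Σ_{a∈A₀} q_a (f(0)+α+Σ_j θ_j H_j(a))`,
where `D(q‖p) = I(p) - I(q) - Σ_a (q_a - p_a) f(p_a)` is the Bregman divergence;
in particular `p` maximises `I(q) - Σ_j θ_j ⟨q,H_j⟩`. -/
theorem stmt_6 {A : Type*} [Fintype A]
    {n : ℕ} (H : Fin n → A → ℝ) (θ : Fin n → ℝ) (α : ℝ) (A₀ : Finset A)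
    (f : ℝ → ℝ)
    (hfc : ContinuousOn f (Icc 0 1)) (hfm : StrictMonoOn f (Icc 0 1))
    (h : ℝ → ℝ) (hh : ∀ u, h u = -∫ v in (0:ℝ)..u, f v)
    (p : A → ℝ) (hp0 : ∀ a, 0 ≤ p a) (hpsum : ∑ a, p a = 1)
    (heq : ∀ a ∉ A₀, f (p a) = -α - ∑ j, θ j * H j a)
    (hzero : ∀ a ∈ A₀, p a = 0)
    (hineq : ∀ a ∈ A₀, 0 ≤ f 0 + α + ∑ j, θ j * H j a) :
    ∀ q : A → ℝ, (∀ a, 0 ≤ q a) → ∑ a, q a = 1 →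
      ((∑ a, h (q a)) - ∑ j, θ j * ∑ a, q a * H j a =
        (∑ a, h (p a)) - (∑ j, θ j * ∑ a, p a * H j a)
          - ((∑ a, h (p a)) - (∑ a, h (q a)) - ∑ a, (q a - p a) * f (p a))
          - ∑ a ∈ A₀, q a * (f 0 + α + ∑ j, θ j * H j a)) ∧
      (∑ a, h (q a)) - ∑ j, θ j * ∑ a, q a * H j a ≤
        (∑ a, h (p a)) - ∑ j, θ j * ∑ a, p a * H j a := by
  classical
  intro q hq0 hqsum
  -- membership in [0,1]
  have hmem : ∀ (r : A → ℝ), (∀ a, 0 ≤ r a) → ∑ a, r a = 1 → ∀ a, r a ∈ Icc (0:ℝ) 1 := by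
    intro r hr hrs a
    refine ⟨hr a, ?_⟩
    calc r a ≤ ∑ b, r b := Finset.single_le_sum (fun b _ => hr b) (Finset.mem_univ a)
      _ = 1 := hrs
  have hpmem := hmem p hp0 hpsum
  have hqmem := hmem q hq0 hqsum
  -- the key algebraic identity
  have hpt : ∀ a, (q a - p a) * f (p a) + (q a - p a) * (α + ∑ j, θ j * H j a) =
      if a ∈ A₀ then q a * (f 0 + α + ∑ j, θ j * H j a) else 0 := by
    intro a
    by_cases ha : a ∈ A₀
    · rw [if_pos ha, hzero a ha]; ring
    · rw [if_neg ha, heq a ha]; ring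
  have hsum := Finset.sum_congr rfl (fun a (_ : a ∈ Finset.univ) => hpt a)
  rw [Finset.sum_add_distrib, Finset.sum_ite_mem, Finset.univ_inter] at hsum
  have h2 : ∑ a, (q a - p a) * (α + ∑ j, θ j * H j a) =
      ∑ j, θ j * ∑ a, q a * H j a - ∑ j, θ j * ∑ a, p a * H j a := by
    have hswap : ∑ a, ∑ j, (q a - p a) * (θ j * H j a)
        = ∑ j, ∑ a, (q a - p a) * (θ j * H j a) := Finset.sum_comm
    calc ∑ a, (q a - p a) * (α + ∑ j, θ j * H j a)
        = (∑ a, (q a - p a) * α) + ∑ a, ∑ j, (q a - p a) * (θ j * H j a) := by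
          rw [← Finset.sum_add_distrib]
          refine Finset.sum_congr rfl fun a _ => ?_
          rw [mul_add, Finset.mul_sum]
      _ = (∑ a, q a - ∑ a, p a) * α
            + ∑ j, (θ j * ∑ a, q a * H j a - θ j * ∑ a, p a * H j a) := by
          rw [hswap]
          congr 1
          · rw [← Finset.sum_sub_distrib, Finset.sum_mul]
          · refine Finset.sum_congr rfl fun j _ => ?_
            rw [Finset.mul_sum, Finset.mul_sum, ← Finset.sum_sub_distrib]
            exact Finset.sum_congr rfl fun a _ => by ring
      _ = ∑ j, θ j * ∑ a, q a * H j a - ∑ j, θ j * ∑ a, p a * H j a := by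
          rw [hqsum, hpsum, Finset.sum_sub_distrib]; ring
  have hT : ∑ a, (q a - p a) * f (p a) =
      ∑ j, θ j * ∑ a, p a * H j a - ∑ j, θ j * ∑ a, q a * H j a
        + ∑ a ∈ A₀, q a * (f 0 + α + ∑ j, θ j * H j a) := by
    rw [h2] at hsum; linarith
  constructor
  · linarith [hT]
  · -- inequality: Bregman nonnegativity + nonneg A₀ term
    have hD : ∀ a, h (q a) - h (p a) ≤ -((q a - p a) * f (p a)) := by
      intro a
      rw [hh, hh]
      have hadd : (∫ v in (0:ℝ)..(p a), f v) + (∫ v in (p a)..(q a), f v)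
          = ∫ v in (0:ℝ)..(q a), f v := by
        apply intervalIntegral.integral_add_adjacent_intervals
        · exact (hfc.mono (uIcc_subset_Icc ⟨le_refl 0, zero_le_one⟩ (hpmem a))).intervalIntegrable
        · exact (hfc.mono (uIcc_subset_Icc (hpmem a) (hqmem a))).intervalIntegrable
      have hkey := tangent_le_aux hfc hfm.monotoneOn (hpmem a) (hqmem a)
      linarith
    have hDsum : ∑ a, h (q a) - ∑ a, h (p a) ≤ - ∑ a, (q a - p a) * f (p a) := by
      rw [← Finset.sum_sub_distrib, ← Finset.sum_neg_distrib]
      exact Finset.sum_le_sum fun a _ => hD a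
    have hA0 : 0 ≤ ∑ a ∈ A₀, q a * (f 0 + α + ∑ j, θ j * H j a) :=
      Finset.sum_nonneg fun a ha => mul_nonneg (hq0 a) (hineq a ha)
    linarith [hT]
end

section
/- With S and Φ defined as above, the inverse Legendre transform S̄(U) = inf_{θ∈D} { Φ(θ) + Σ_j θ_j U_j } satisfies S̄(U) = S(U) for every U in the domain of S (i.e., every U attained as ⟨p_θ, H⟩ for some θ ∈ D). -/
open Set

/-- Inverse Legendre transform: with `Φ(θ) = I(p_θ) - Σ_j θ_j ⟨p_θ,H_j⟩`, for every
attained energy vector `U = ⟨p_η,H⟩` (with `η ∈ D`), the infimum over `θ ∈ D` of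
`Φ(θ) + Σ_j θ_j U_j` is attained and equals `S(U) = I(p_η)`. -/
theorem stmt_10 {A : Type*} [Fintype A]
    {n : ℕ} (H : Fin n → A → ℝ)
    (h : ℝ → ℝ)
    (D : Set (Fin n → ℝ)) (p : (Fin n → ℝ) → A → ℝ)
    (hprob : ∀ θ ∈ D, (∀ a, 0 ≤ p θ a) ∧ ∑ a, p θ a = 1)
    (hVP : ∀ θ ∈ D, ∀ q : A → ℝ, (∀ a, 0 ≤ q a) → ∑ a, q a = 1 →
      (∑ a, h (q a)) - ∑ j, θ j * ∑ a, q a * H j a ≤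
        (∑ a, h (p θ a)) - ∑ j, θ j * ∑ a, p θ a * H j a) :
    ∀ η ∈ D, IsLeast
      {x : ℝ | ∃ θ ∈ D, x =
        ((∑ a, h (p θ a)) - ∑ j, θ j * ∑ a, p θ a * H j a)
          + ∑ j, θ j * ∑ a, p η a * H j a}
      (∑ a, h (p η a)) := by
  intro η hη
  constructor
  · exact ⟨η, hη, by ring⟩
  · rintro x ⟨θ, hθ, rfl⟩
    have := hVP θ hθ (p η) (hprob η hη).1 (hprob η hη).2
    linarith
end

section
/- For a finite alphabet A, assume ∂p_{θ,a}/∂θ_j = φ(p_{θ,a})(-∂α/∂θ_j - H_j(a)) holds for all a (with φ(0) interpreted as giving zero derivative on A_0(θ)). Define z(θ) = Σ'_a φ(p_{θ,a}), escort P_{θ,a} = φ(p_{θ,a})/z(θ), score X_{j,a} = (1/P_{θ,a}) ∂p_{θ,a}/∂θ_j, Fisher matrix I_{ij} = ⟨P_θ, X_i X_j⟩, covariance σ_{ij} = ⟨P_θ,H_iH_j⟩ - ⟨P_θ,H_i⟩⟨P_θ,H_j⟩, and metric g_{ij} = -∂⟨p_θ,H_j⟩/∂θ_i. Then I_{ij}(θ)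 = z(θ) g_{ij}(θ) = z(θ)^2 σ_{ij}(θ). -/
/-!
Write `w_a = φ(p_{θ,a})` on the support and `0` off it, and `c_j = Dα(e_j)`. The hypothesis on
`Dp` says that `∂_j p_{θ,a} = w_a Y_{j,a}` with `Y_{j,a} = -c_j - H_j(a)` for every `a`, and
`Σ_a ∂_j p_{θ,a} = 0` says that `Y_j` is centred for the weights `w`. Since `P = w / z`, the
score is `X_j = z Y_j` on the support, so `I_{ij} = z Σ_a w_a Y_{i,a} Y_{j,a}`. Centring turns
`g_{ij} = -Σ_a w_a Y_{i,a} H_j(a)` into the same sum, and it shows `⟨P, H_j⟩ = -c_j`, which makes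
the same sum equal to `z σ_{ij}`.
-/

lemma escort_mul_score_mul_score (w z u v : ℝ) :
    w / z * ((1 / (w / z)) * (w * u) * ((1 / (w / z)) * (w * v))) = z * (w * (u * v)) := by
  rcases eq_or_ne w 0 with rfl | hw
  · simp
  rcases eq_or_ne z 0 with rfl | hz
  · simp
  field_simp

section WeightedSums

variable {A : Type*} [Fintype A] (w : A → ℝ)

lemma sum_mul_mul_sub_of_sum_mul_eq_zero {u : A → ℝ} (hu : ∑ a, w a * u a = 0)
    (t : ℝ) (f : A → ℝ) :
    ∑ a, w a * (u a * (t - f a)) = -∑ a, w a * u a * f a := by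
  have : ∑ a, w a * (u a * (t - f a)) = t * ∑ a, w a * u a - ∑ a, w a * u a * f a := by
    rw [Finset.mul_sum, ← Finset.sum_sub_distrib]
    exact Finset.sum_congr rfl fun a _ => by ring
  rw [this, hu]
  ring

lemma sq_mul_cov_escort_eq {z : ℝ} (hz : z = ∑ a, w a) {f g : A → ℝ} {s t : ℝ}
    (hf : ∑ a, w a * (s - f a) = 0) (hg : ∑ a, w a * (t - g a) = 0) :
    z ^ 2 * ((∑ a, w a / z * (f a * g a)) - (∑ a, w a / z * f a) * (∑ a, w a / z * g a))
      = z * ∑ a, w a * ((s - f a) * (t - g a)) := by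
  rcases eq_or_ne z 0 with rfl | hz0
  · simp
  have mean (s : ℝ) (f : A → ℝ) (hf : ∑ a, w a * (s - f a) = 0) : ∑ a, w a * f a = s * z := by
    simp only [mul_sub, Finset.sum_sub_distrib, ← Finset.sum_mul, ← hz] at hf
    linarith
  have expand : ∑ a, w a * ((s - f a) * (t - g a))
      = s * t * z - s * ∑ a, w a * g a - t * ∑ a, w a * f a + ∑ a, w a * (f a * g a) := by
    simp only [hz, Finset.mul_sum, ← Finset.sum_sub_distrib, ← Finset.sum_add_distrib]
    exact Finset.sum_congr rfl fun a _ => by ring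
  simp only [div_mul_eq_mul_div, ← Finset.sum_div]
  rw [expand, mean s f hf, mean t g hg]
  field_simp
  ring

end WeightedSums

theorem stmt_14_general {A : Type*} [Fintype A] {n : ℕ}
    (p : (Fin n → ℝ) → A → ℝ) (θ : Fin n → ℝ) (φ : ℝ → ℝ)
    (H : Fin n → A → ℝ)
    (Dα : (Fin n → ℝ) →L[ℝ] ℝ) (Dp : A → ((Fin n → ℝ) →L[ℝ] ℝ))
    (hpeq : ∀ a, p θ a ≠ 0 → Dp a = φ (p θ a) •
      (-Dα - ∑ j, H j a • (ContinuousLinearMap.proj j : (Fin n → ℝ) →L[ℝ] ℝ)))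
    (hp0' : ∀ a, p θ a = 0 → Dp a = 0)
    (hreg : ∑ a, Dp a = 0)
    (z : ℝ) (hz : z = ∑ a, {a | p θ a ≠ 0}.indicator (fun a => φ (p θ a)) a)
    (P : A → ℝ) (hP : ∀ a, P a = {a | p θ a ≠ 0}.indicator (fun a => φ (p θ a)) a / z)
    (X : Fin n → A → ℝ) (hX : ∀ j a, X j a = (1 / P a) * Dp a (Pi.single j 1))
    (Imat σmat g : Fin n → Fin n → ℝ)
    (hI : ∀ i j, Imat i j = ∑ a, P a * (X i a * X j a))
    (hσ : ∀ i j, σmat i j =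
      (∑ a, P a * (H i a * H j a)) - (∑ a, P a * H i a) * (∑ a, P a * H j a))
    (hg : ∀ i j, g i j = -(∑ a, Dp a (Pi.single i 1) * H j a)) :
    ∀ i j, Imat i j = z * g i j ∧ Imat i j = z ^ 2 * σmat i j := by
  set w := {a | p θ a ≠ 0}.indicator (fun a => φ (p θ a))
  set Y : Fin n → A → ℝ := fun j a => -Dα (Pi.single j 1) - H j a
  have hDp (j : Fin n) (a : A) : Dp a (Pi.single j 1) = w a * Y j a := by
    by_cases ha : p θ a = 0
    · simp [w, Y, hp0' a ha, ha]
    · simp [w, Y, hpeq a ha, ha, Pi.single_apply]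
  have hY (j : Fin n) : ∑ a, w a * Y j a = 0 := by
    simp only [← hDp, ← sum_apply, hreg, zero_apply]
  intro i j
  have hIz : Imat i j = z * ∑ a, w a * (Y i a * Y j a) := by
    simp only [hI, hX, hP, hDp, escort_mul_score_mul_score, ← Finset.mul_sum]
  have hgY : g i j = ∑ a, w a * (Y i a * Y j a) := by
    simp only [hg, hDp, Y, sum_mul_mul_sub_of_sum_mul_eq_zero w (hY i)]
  refine ⟨hIz.trans (by rw [hgY]), hIz.trans ?_⟩
  simp only [hσ, hP]
  exact (sq_mul_cov_escort_eq w hz (hY i) (hY j)).symm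

/-- Generalised Fisher information: for a finite alphabet, if
`∂p_{θ,a}/∂θ = φ(p_{θ,a})·(-Dα - Σ_j H_j(a) dθ_j)` on the support (zero derivative off
the support) and `Σ_a ∂p_{θ,a}/∂θ_j = 0`, then with `z(θ) = Σ'_a φ(p_{θ,a})`, escort
`P_{θ,a} = φ(p_{θ,a})/z(θ)`, scores `X_{j,a} = (1/P_{θ,a}) ∂p_{θ,a}/∂θ_j`, Fisher matrix
`I_{ij} = ⟨P,X_iX_j⟩`, covariance `σ_{ij} = ⟨P,H_iH_j⟩ - ⟨P,H_i⟩⟨P,H_j⟩` and metric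
`g_{ij} = -∂⟨p_θ,H_j⟩/∂θ_i`, one has `I_{ij} = z g_{ij} = z² σ_{ij}`. -/
theorem stmt_14 {A : Type*} [Fintype A] {n : ℕ}
    (p : (Fin n → ℝ) → A → ℝ) (θ : Fin n → ℝ) (φ : ℝ → ℝ) (α : (Fin n → ℝ) → ℝ)
    (H : Fin n → A → ℝ)
    (Dα : (Fin n → ℝ) →L[ℝ] ℝ) (Dp : A → ((Fin n → ℝ) →L[ℝ] ℝ))
    (hp0 : ∀ a, 0 ≤ p θ a) (hpsum : ∑ a, p θ a = 1)
    (hφpos : ∀ u : ℝ, 0 < u → u ≤ 1 → 0 < φ u)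
    (hα : HasFDerivAt α Dα θ)
    (hp : ∀ a, HasFDerivAt (fun ϑ => p ϑ a) (Dp a) θ)
    (hpeq : ∀ a, p θ a ≠ 0 → Dp a = φ (p θ a) •
      (-Dα - ∑ j, H j a • (ContinuousLinearMap.proj j : (Fin n → ℝ) →L[ℝ] ℝ)))
    (hp0' : ∀ a, p θ a = 0 → Dp a = 0)
    (hreg : ∑ a, Dp a = 0)
    (z : ℝ) (hz : z = ∑ a, {a | p θ a ≠ 0}.indicator (fun a => φ (p θ a)) a)
    (P : A → ℝ) (hP : ∀ a, P a = {a | p θ a ≠ 0}.indicator (fun a => φ (p θ a)) a / z)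
    (X : Fin n → A → ℝ) (hX : ∀ j a, X j a = (1 / P a) * Dp a (Pi.single j 1))
    (Imat σmat g : Fin n → Fin n → ℝ)
    (hI : ∀ i j, Imat i j = ∑ a, P a * (X i a * X j a))
    (hσ : ∀ i j, σmat i j =
      (∑ a, P a * (H i a * H j a)) - (∑ a, P a * H i a) * (∑ a, P a * H j a))
    (hg : ∀ i j, g i j = -(∑ a, Dp a (Pi.single i 1) * H j a)) :
    ∀ i j, Imat i j = z * g i j ∧ Imat i j = z ^ 2 * σmat i j :=
  stmt_14_general p θ φ H Dα Dp hpeq hp0' hreg z hz P hP X hX Imat σmat g hI hσ hg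
end
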